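/- Let x ∈ E_d and r, r' ∈ ℝ₊^d, and let s and s' be the smallest solutions of the systems (r, x) and (r', x), respectively. If r' ≤ r coordinatewise, then s' ≤ s. Moreover, if (r_n)_{n≥0} is a nondecreasing sequence in ℝ₊^d with lim_{n→∞} r_n = r, then the sequence (s_n)_{n≥0} of smallest solutions of the systems (r_n, x) satisfies lim_{n→∞} s_n = s. -/

import Mathlib

open Filter Topology Set
open scoped ENNReal

noncomputable section

/-- The value of `f` "at `t⁻`" for an extended time `t ∈ [0,∞]`, as an extended real number:
at `t = 0` it is `f 0` (convention `f(0-) = f(0)`), at `t = ∞` it is the limit (limsup) of `f`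
at infinity, and at a finite `t > 0` it is the left limit of `f` at `t`. -/
def preLimE (f : ℝ → ℝ) (t : ℝ≥0∞) : EReal :=
  if t = 0 then (f 0 : EReal)
  else if t = ⊤ then Filter.limsup (fun s : ℝ => (f s : EReal)) Filter.atTop
  else ((Function.leftLim f t.toReal : ℝ) : EReal)

/-- The family `x = (x^{i,j})_{i,j ∈ [d]}` of real functions on `ℝ₊` belongs to the class
`E_d`: each `x i j` is càdlàg on `ℝ₊` with `x i j 0 = 0`, each diagonal entry `x i i` is
downward skip free (no negative jumps), and each off-diagonal entry is nondecreasing. -/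
structure MemE (d : ℕ) (x : Fin d → Fin d → ℝ → ℝ) : Prop where
  zero : ∀ i j, x i j 0 = 0
  rightCont : ∀ i j, ∀ t : ℝ, 0 ≤ t → ContinuousWithinAt (x i j) (Set.Ici t) t
  leftLimEx : ∀ i j, ∀ t : ℝ, 0 < t →
    ∃ l : ℝ, Filter.Tendsto (x i j) (nhdsWithin t (Set.Iio t)) (nhds l)
  skipFree : ∀ i, ∀ t : ℝ, 0 < t → Function.leftLim (x i i) t ≤ x i i t
  mono : ∀ i j, i ≠ j → MonotoneOn (x i j) (Set.Ici 0)

/-- `s ∈ [0,∞]^d` is a solution of the system `(r, x)`: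
`r i + ∑_j x^{i,j}(s_j−) = 0` for every coordinate `i` with `s i < ∞`
(the equality being required in the extended reals, hence implicitly the sum is finite). -/
def IsSolution (d : ℕ) (x : Fin d → Fin d → ℝ → ℝ) (r : Fin d → ℝ)
    (s : Fin d → ℝ≥0∞) : Prop :=
  ∀ i, s i ≠ ⊤ → (r i : EReal) + ∑ j, preLimE (x i j) (s j) = 0


/-- `s` is the smallest solution of the system `(r, x)`: it is a solution and every
solution `t` satisfies `s ≤ t` coordinatewise. -/
def IsSmallestSolution (d : ℕ) (x : Fin d → Fin d → ℝ → ℝ) (r : Fin d → ℝ)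
    (s : Fin d → ℝ≥0∞) : Prop :=
  IsSolution d x r s ∧ ∀ t : Fin d → ℝ≥0∞, IsSolution d x r t → s ≤ t

/-!
The `i`-th equation says that `x^{i,i}(s_i−) = -(r i + ∑_{j ≠ i} x^{i,j}(s_j−))`. Taking for `s_i`
the first time at which `x^{i,i}(u−)` falls to that level defines a monotone map on the complete
lattice `[0,∞]^d`. Since `x^{i,i}` has no negative jumps, the level is then hit exactly, so fixed
points of this map are solutions. Every solution of `(r, x)` is a post-fixed point of the map built
from `r' ≤ r`, so Knaster–Tarski gives a solution of `(r', x)` below it, whence `s' ≤ s`.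

For `r_n ↑ r` the smallest solutions `s_n` increase and stay below `s`. Their supremum solves
`(r, x)`: along increasing times, left limits converge (for the off-diagonal terms also at `∞`, by
monotonicity), so one can pass to the limit in the equations. Minimality of `s` closes the gap.
-/

open Function

section LeftLimits

variable {g : ℝ → ℝ}

theorem leftLim_mem_of_mapsTo {V : Set ℝ} (hV : IsClosed V) {a t : ℝ} (hat : a < t)
    (hg : MapsTo g (Ioo a t) V) (hlim : ∃ l, Tendsto g (𝓝[<] t) (𝓝 l)) :
    leftLim g t ∈ V := by
  obtain ⟨l, hl⟩ := hlim
  rw [leftLim_eq_of_tendsto hl]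
  exact hV.mem_of_tendsto hl (eventually_of_mem (Ioo_mem_nhdsLT hat) hg)

theorem tendsto_leftLim_nhdsLT (hlim : ∀ t, 0 < t → ∃ l, Tendsto g (𝓝[<] t) (𝓝 l))
    {t L : ℝ} (ht : 0 < t) (hL : Tendsto g (𝓝[<] t) (𝓝 L)) :
    Tendsto (leftLim g) (𝓝[<] t) (𝓝 L) := by
  refine (closed_nhds_basis L).tendsto_right_iff.2 fun V ⟨hVL, hV⟩ => ?_
  obtain ⟨a, hat, haV⟩ := mem_nhdsLT_iff_exists_Ioo_subset.1 (hL hVL)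
  filter_upwards [Ioo_mem_nhdsLT (max_lt hat ht)] with z hz
  exact leftLim_mem_of_mapsTo hV ((le_max_left a 0).trans_lt hz.1)
    (fun w hw => haV ⟨hw.1, hw.2.trans hz.2⟩) (hlim z ((le_max_right a 0).trans_lt hz.1))

theorem tendsto_leftLim_nhdsGT (hlim : ∀ t, 0 < t → ∃ l, Tendsto g (𝓝[<] t) (𝓝 l))
    {t L : ℝ} (ht : 0 ≤ t) (hL : Tendsto g (𝓝[>] t) (𝓝 L)) :
    Tendsto (leftLim g) (𝓝[>] t) (𝓝 L) := by
  refine (closed_nhds_basis L).tendsto_right_iff.2 fun V ⟨hVL, hV⟩ => ?_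
  obtain ⟨b, htb, hbV⟩ := mem_nhdsGT_iff_exists_Ioo_subset.1 (hL hVL)
  filter_upwards [Ioo_mem_nhdsGT htb] with z hz
  exact leftLim_mem_of_mapsTo hV hz.1 (fun w hw => hbV ⟨hw.1, hw.2.trans hz.2⟩)
    (hlim z (ht.trans_lt hz.1))

theorem leftLim_le_of_monotoneOn (hm : MonotoneOn g (Ici 0))
    (hlim : ∀ t, 0 < t → ∃ l, Tendsto g (𝓝[<] t) (𝓝 l)) {t : ℝ} (ht : 0 < t) :
    leftLim g t ≤ g t :=
  leftLim_mem_of_mapsTo isClosed_Iic ht (fun _ hz => hm hz.1.le ht.le hz.2.le) (hlim t ht)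

theorem le_leftLim_of_monotoneOn (hm : MonotoneOn g (Ici 0))
    (hlim : ∀ t, 0 < t → ∃ l, Tendsto g (𝓝[<] t) (𝓝 l)) {s t : ℝ} (hs : 0 ≤ s) (hst : s < t) :
    g s ≤ leftLim g t :=
  leftLim_mem_of_mapsTo isClosed_Ici hst (fun _ hz => hm hs (hs.trans hz.1.le) hz.1.le)
    (hlim t (hs.trans_lt hst))

end LeftLimits

section PreLimE

variable {g : ℝ → ℝ}

theorem preLimE_zero (g : ℝ → ℝ) : preLimE g 0 = g 0 := if_pos rfl

theorem preLimE_top (g : ℝ → ℝ) : preLimE g ⊤ = limsup (fun s => (g s : EReal)) atTop := by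
  simp [preLimE]

theorem preLimE_of_ne_zero_of_ne_top (g : ℝ → ℝ) {u : ℝ≥0∞} (h0 : u ≠ 0) (htop : u ≠ ⊤) :
    preLimE g u = leftLim g u.toReal := by
  simp [preLimE, h0, htop]

theorem preLimE_ne_bot (g : ℝ → ℝ) {u : ℝ≥0∞} (hu : u ≠ ⊤) : preLimE g u ≠ ⊥ := by
  rcases eq_or_ne u 0 with rfl | h0
  · simp [preLimE_zero]
  · simp [preLimE_of_ne_zero_of_ne_top g h0 hu]

theorem preLimE_le_coe_toReal (hsf : ∀ t, 0 < t → leftLim g t ≤ g t) {u : ℝ≥0∞} (hu : u ≠ ⊤) :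
    preLimE g u ≤ g u.toReal := by
  rcases eq_or_ne u 0 with rfl | h0
  · simp [preLimE_zero]
  · rw [preLimE_of_ne_zero_of_ne_top g h0 hu, EReal.coe_le_coe_iff]
    exact hsf _ (ENNReal.toReal_pos h0 hu)

theorem tendsto_preLimE_iSup_of_ne_top (hlim : ∀ t, 0 < t → ∃ l, Tendsto g (𝓝[<] t) (𝓝 l))
    {u : ℕ → ℝ≥0∞} (hu : Monotone u) (hU : ⨆ n, u n ≠ ⊤) :
    Tendsto (fun n => preLimE g (u n)) atTop (𝓝 (preLimE g (⨆ n, u n))) := by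
  by_cases hex : ∃ N, u N = ⨆ n, u n
  · obtain ⟨N, hN⟩ := hex
    refine tendsto_const_nhds.congr' ?_
    filter_upwards [eventually_ge_atTop N] with n hn
    rw [le_antisymm (le_iSup u n) (hN ▸ hu hn)]
  simp only [not_exists] at hex
  set U := ⨆ n, u n
  have hlt : ∀ n, u n < U := fun n => (le_iSup u n).lt_of_ne (hex n)
  have hU0 : U ≠ 0 := ne_bot_of_gt (hlt 0)
  have hT : 0 < U.toReal := ENNReal.toReal_pos hU0 hU
  have huU : Tendsto u atTop (𝓝 U) := tendsto_atTop_iSup hu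
  have hreal : Tendsto (fun n => (u n).toReal) atTop (𝓝[<] U.toReal) :=
    tendsto_nhdsWithin_iff.2 ⟨(ENNReal.tendsto_toReal hU).comp huU, Eventually.of_forall
      fun n => (ENNReal.toReal_lt_toReal (hlt n).ne_top hU).2 (hlt n)⟩
  obtain ⟨l, hl⟩ := hlim _ hT
  rw [preLimE_of_ne_zero_of_ne_top g hU0 hU, leftLim_eq_of_tendsto hl]
  refine ((continuous_coe_real_ereal.tendsto _).comp
    ((tendsto_leftLim_nhdsLT hlim hT hl).comp hreal)).congr' ?_
  filter_upwards [huU.eventually (eventually_ne_nhds hU0)] with n hn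
  exact (preLimE_of_ne_zero_of_ne_top g hn (hlt n).ne_top).symm

variable (hm : MonotoneOn g (Ici 0)) (hlim : ∀ t, 0 < t → ∃ l, Tendsto g (𝓝[<] t) (𝓝 l))
include hm hlim

theorem coe_le_preLimE {s : ℝ} (hs : 0 ≤ s) {u : ℝ≥0∞} (hsu : ENNReal.ofReal s < u) :
    (g s : EReal) ≤ preLimE g u := by
  rcases eq_or_ne u ⊤ with rfl | hu
  · rw [preLimE_top]
    refine le_limsup_of_frequently_le' (Eventually.frequently ?_)
    filter_upwards [eventually_ge_atTop s] with z hz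
    exact EReal.coe_le_coe_iff.2 (hm hs (hs.trans hz) hz)
  · rw [preLimE_of_ne_zero_of_ne_top g (ne_bot_of_gt hsu) hu, EReal.coe_le_coe_iff]
    exact le_leftLim_of_monotoneOn hm hlim hs ((ENNReal.ofReal_lt_iff_lt_toReal hs hu).1 hsu)

theorem monotone_preLimE : Monotone (preLimE g) := by
  intro u v huv
  rcases huv.eq_or_lt with rfl | huv
  · rfl
  rcases eq_or_ne u 0 with rfl | hu0
  · rw [preLimE_zero]
    exact coe_le_preLimE hm hlim le_rfl (by simpa using huv)
  have hu : u ≠ ⊤ := huv.ne_top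
  calc preLimE g u ≤ g u.toReal := by
        rw [preLimE_of_ne_zero_of_ne_top g hu0 hu, EReal.coe_le_coe_iff]
        exact leftLim_le_of_monotoneOn hm hlim (ENNReal.toReal_pos hu0 hu)
    _ ≤ preLimE g v :=
        coe_le_preLimE hm hlim ENNReal.toReal_nonneg (by rwa [ENNReal.ofReal_toReal hu])

theorem preLimE_nonneg (hg0 : g 0 = 0) (u : ℝ≥0∞) : 0 ≤ preLimE g u := by
  simpa [preLimE_zero, hg0] using monotone_preLimE hm hlim (zero_le : 0 ≤ u)

theorem tendsto_preLimE_top {u : ℕ → ℝ≥0∞} (hu : Tendsto u atTop (𝓝 ⊤)) :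
    Tendsto (fun n => preLimE g (u n)) atTop (𝓝 (preLimE g ⊤)) := by
  refine tendsto_order.2 ⟨fun b hb => ?_, fun b hb =>
    Eventually.of_forall fun n => (monotone_preLimE hm hlim le_top).trans_lt hb⟩
  rw [preLimE_top] at hb
  obtain ⟨s, hbs, hs⟩ :=
    ((frequently_lt_of_lt_limsup (by isBoundedDefault) hb).and_eventually
      (eventually_ge_atTop 0)).exists
  filter_upwards [hu.eventually (lt_mem_nhds ENNReal.ofReal_lt_top)] with n hn
  exact hbs.trans_le (coe_le_preLimE hm hlim hs hn)

theorem tendsto_preLimE_iSup {u : ℕ → ℝ≥0∞} (hu : Monotone u) :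
    Tendsto (fun n => preLimE g (u n)) atTop (𝓝 (preLimE g (⨆ n, u n))) := by
  by_cases hU : ⨆ n, u n = ⊤
  · rw [hU]
    exact tendsto_preLimE_top hm hlim (hU ▸ tendsto_atTop_iSup hu)
  · exact tendsto_preLimE_iSup_of_ne_top hlim hu hU

end PreLimE

theorem EReal.tendsto_finset_sum {ι α : Type*} {l : Filter α} {s : Finset ι} {f : ι → α → EReal}
    {L : ι → EReal} (hf : ∀ i ∈ s, Tendsto (f i) l (𝓝 (L i))) (hL : ∀ i ∈ s, L i ≠ ⊥) :
    Tendsto (fun a => ∑ i ∈ s, f i a) l (𝓝 (∑ i ∈ s, L i)) := by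
  classical
  induction s using Finset.induction_on with
  | empty => simpa using tendsto_const_nhds
  | insert i s hi ih =>
    simp only [Finset.sum_insert hi]
    have hsum : ∑ j ∈ s, L j ≠ ⊥ := Finset.sum_induction _ (· ≠ ⊥)
      (fun _ _ ha hb => EReal.add_ne_bot_iff.2 ⟨ha, hb⟩) EReal.zero_ne_bot
      (fun j hj => hL j (Finset.mem_insert_of_mem hj))
    have hLi := hL i (Finset.mem_insert_self i s)
    exact (EReal.continuousAt_add (Or.inr hsum) (Or.inl hLi)).tendsto.comp
      ((hf i (Finset.mem_insert_self i s)).prodMk_nhds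
        (ih (fun j hj => hf j (Finset.mem_insert_of_mem hj))
          (fun j hj => hL j (Finset.mem_insert_of_mem hj))))

section FirstPassage

def firstPassage (g : ℝ → ℝ) (a : EReal) : ℝ≥0∞ :=
  sInf {u | u ≠ ⊤ ∧ preLimE g u + a ≤ 0}

variable {g : ℝ → ℝ}

theorem firstPassage_le {a : EReal} {u : ℝ≥0∞} (hu : u ≠ ⊤) (h : preLimE g u + a ≤ 0) :
    firstPassage g a ≤ u :=
  sInf_le ⟨hu, h⟩

theorem monotone_firstPassage (g : ℝ → ℝ) : Monotone (firstPassage g) :=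
  fun _ _ hab => sInf_le_sInf fun _ hu => ⟨hu.1, (add_le_add_right hab _).trans hu.2⟩

theorem firstPassage_top (g : ℝ → ℝ) : firstPassage g ⊤ = ⊤ := by
  refine sInf_eq_top.2 fun u hu => absurd hu.2 ?_
  rw [EReal.add_top_of_ne_bot (preLimE_ne_bot g hu.1)]
  exact not_le.2 EReal.zero_lt_top

theorem le_apply_of_lt_toReal_firstPassage (hrc : ∀ t, 0 ≤ t → ContinuousWithinAt g (Ici t) t)
    (hlim : ∀ t, 0 < t → ∃ l, Tendsto g (𝓝[<] t) (𝓝 l)) {A w : ℝ} (hw : 0 ≤ w)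
    (hwσ : w < (firstPassage g A).toReal) : -A ≤ g w := by
  by_contra! hgw
  -- right continuity at `w` puts left limits below the level before the passage time
  have htend := tendsto_leftLim_nhdsGT hlim hw ((hrc w hw).mono Ioi_subset_Ici_self)
  obtain ⟨z, hzA, hz⟩ :=
    ((htend.eventually (gt_mem_nhds hgw)).and (Ioo_mem_nhdsGT hwσ)).exists
  have hz0 : 0 < z := hw.trans_lt hz.1
  have hle : firstPassage g A ≤ ENNReal.ofReal z := by
    refine firstPassage_le ENNReal.ofReal_ne_top ?_
    rw [preLimE_of_ne_zero_of_ne_top g (by simpa using hz0) ENNReal.ofReal_ne_top,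
      ENNReal.toReal_ofReal hz0.le, ← EReal.coe_add, EReal.coe_nonpos]
    linarith
  have := ENNReal.toReal_mono ENNReal.ofReal_ne_top hle
  rw [ENNReal.toReal_ofReal hz0.le] at this
  linarith [hz.2]

theorem apply_toReal_firstPassage_le (hrc : ∀ t, 0 ≤ t → ContinuousWithinAt g (Ici t) t)
    (hlim : ∀ t, 0 < t → ∃ l, Tendsto g (𝓝[<] t) (𝓝 l)) {A : ℝ} (hσ : firstPassage g A ≠ ⊤)
    (hnot : ¬ preLimE g (firstPassage g A) + A ≤ 0) : g (firstPassage g A).toReal ≤ -A := by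
  set σ := firstPassage g A
  have hT : 0 ≤ σ.toReal := ENNReal.toReal_nonneg
  by_contra! hgσ
  -- passage times accumulate at `σ` from the right, where left limits converge to `g σ`
  have htend := tendsto_leftLim_nhdsGT hlim hT ((hrc _ hT).mono Ioi_subset_Ici_self)
  obtain ⟨b, hσb, hb⟩ := mem_nhdsGT_iff_exists_Ioo_subset.1 (htend.eventually (lt_mem_nhds hgσ))
  have hσb' : σ < ENNReal.ofReal b := by
    rwa [← ENNReal.ofReal_toReal hσ, ENNReal.ofReal_lt_ofReal_iff (hT.trans_lt hσb)]
  obtain ⟨v, ⟨hv, hvA⟩, hvb⟩ := sInf_lt_iff.1 hσb'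
  have hσv : σ < v := (sInf_le ⟨hv, hvA⟩ : σ ≤ v).lt_of_ne (by rintro rfl; exact hnot hvA)
  have hvT : σ.toReal < v.toReal := (ENNReal.toReal_lt_toReal hσ hv).2 hσv
  have hvb' : v.toReal < b := ENNReal.toReal_lt_of_lt_ofReal hvb
  rw [preLimE_of_ne_zero_of_ne_top g (ne_bot_of_gt hσv) hv, ← EReal.coe_add,
    EReal.coe_nonpos] at hvA
  have : -A < leftLim g v.toReal := hb ⟨hvT, hvb'⟩
  linarith

theorem preLimE_firstPassage_add_eq_zero (hg0 : g 0 = 0)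
    (hrc : ∀ t, 0 ≤ t → ContinuousWithinAt g (Ici t) t)
    (hlim : ∀ t, 0 < t → ∃ l, Tendsto g (𝓝[<] t) (𝓝 l))
    (hsf : ∀ t, 0 < t → leftLim g t ≤ g t) {a : EReal} (ha : 0 ≤ a) (hσ : firstPassage g a ≠ ⊤) :
    preLimE g (firstPassage g a) + a = 0 := by
  have hatop : a ≠ ⊤ := by rintro rfl; exact hσ (firstPassage_top g)
  lift a to ℝ using ⟨hatop, ne_bot_of_le_ne_bot EReal.zero_ne_bot ha⟩
  set σ := firstPassage g a
  refine le_antisymm ?_ ?_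
  · by_cases hσS : preLimE g σ + a ≤ 0
    · exact hσS
    calc preLimE g σ + a ≤ (g σ.toReal : EReal) + a :=
          add_le_add_left (preLimE_le_coe_toReal hsf hσ) _
      _ ≤ 0 := by
          rw [← EReal.coe_add, EReal.coe_nonpos]
          linarith [apply_toReal_firstPassage_le hrc hlim hσ hσS]
  · rcases eq_or_ne σ 0 with h0 | h0
    · rw [h0, preLimE_zero, hg0, EReal.coe_zero, zero_add]
      exact ha
    have hT := ENNReal.toReal_pos h0 hσ
    have hge : -a ≤ leftLim g σ.toReal :=
      leftLim_mem_of_mapsTo isClosed_Ici hT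
        (fun w hw => le_apply_of_lt_toReal_firstPassage hrc hlim hw.1.le hw.2) (hlim _ hT)
    rw [preLimE_of_ne_zero_of_ne_top g h0 hσ, ← EReal.coe_add, EReal.coe_nonneg]
    linarith

end FirstPassage

section Solutions

variable {d : ℕ} {x : Fin d → Fin d → ℝ → ℝ}

theorem MemE.preLimE_nonneg (hx : MemE d x) {i j : Fin d} (hij : i ≠ j) (u : ℝ≥0∞) :
    0 ≤ preLimE (x i j) u :=
  _root_.preLimE_nonneg (hx.mono i j hij) (hx.leftLimEx i j) (hx.zero i j) u

def offDiagLevel (x : Fin d → Fin d → ℝ → ℝ) (r : Fin d → ℝ) (i : Fin d) (t : Fin d → ℝ≥0∞) :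
    EReal :=
  r i + ∑ j ∈ Finset.univ.erase i, preLimE (x i j) (t j)

/-- `t` solves the `i`-th equation iff `x^{i,i}(t_i−) + offDiagLevel x r i t = 0`; `passageMap`
replaces `t i` by the first time at which `x^{i,i}(u−)` falls to that level. -/
def passageMap (x : Fin d → Fin d → ℝ → ℝ) (r : Fin d → ℝ) (t : Fin d → ℝ≥0∞) : Fin d → ℝ≥0∞ :=
  fun i => firstPassage (x i i) (offDiagLevel x r i t)

theorem coe_add_sum_preLimE_eq (x : Fin d → Fin d → ℝ → ℝ) (r : Fin d → ℝ) (i : Fin d)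
    (t : Fin d → ℝ≥0∞) :
    (r i : EReal) + ∑ j, preLimE (x i j) (t j) = preLimE (x i i) (t i) + offDiagLevel x r i t := by
  rw [offDiagLevel, ← Finset.add_sum_erase _ _ (Finset.mem_univ i), add_left_comm]

theorem offDiagLevel_nonneg (hx : MemE d x) {r : Fin d → ℝ} (hr : ∀ i, 0 ≤ r i) (i : Fin d)
    (t : Fin d → ℝ≥0∞) : 0 ≤ offDiagLevel x r i t :=
  add_nonneg (EReal.coe_nonneg.2 (hr i)) (Finset.sum_nonneg fun _ hj =>
    hx.preLimE_nonneg (Finset.ne_of_mem_erase hj).symm _)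

theorem monotone_passageMap (hx : MemE d x) (r : Fin d → ℝ) : Monotone (passageMap x r) :=
  fun _ _ htt' i => monotone_firstPassage _ <| add_le_add_right (Finset.sum_le_sum fun j hj =>
    monotone_preLimE (hx.mono i j (Finset.ne_of_mem_erase hj).symm) (hx.leftLimEx i j) (htt' j)) _

theorem isSolution_of_passageMap_eq (hx : MemE d x) {r : Fin d → ℝ} (hr : ∀ i, 0 ≤ r i)
    {t : Fin d → ℝ≥0∞} (ht : passageMap x r t = t) : IsSolution d x r t := by
  intro i hti
  have hσ : firstPassage (x i i) (offDiagLevel x r i t) = t i := congr_fun ht i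
  rw [coe_add_sum_preLimE_eq, ← hσ]
  exact preLimE_firstPassage_add_eq_zero (hx.zero i i) (hx.rightCont i i) (hx.leftLimEx i i)
    (hx.skipFree i) (offDiagLevel_nonneg hx hr i t) (hσ ▸ hti)

theorem passageMap_le_of_isSolution {r r' : Fin d → ℝ} (hrr : ∀ i, r' i ≤ r i)
    {s : Fin d → ℝ≥0∞} (hs : IsSolution d x r s) : passageMap x r' s ≤ s := by
  intro i
  by_cases hsi : s i = ⊤
  · exact hsi ▸ le_top
  refine firstPassage_le hsi ?_
  calc preLimE (x i i) (s i) + offDiagLevel x r' i s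
      ≤ preLimE (x i i) (s i) + offDiagLevel x r i s :=
        add_le_add_right (add_le_add_left (EReal.coe_le_coe_iff.2 (hrr i)) _) _
    _ = 0 := by rw [← coe_add_sum_preLimE_eq]; exact hs i hsi

theorem exists_isSolution_le (hx : MemE d x) {r r' : Fin d → ℝ} (hr' : ∀ i, 0 ≤ r' i)
    (hrr : ∀ i, r' i ≤ r i) {s : Fin d → ℝ≥0∞} (hs : IsSolution d x r s) :
    ∃ t, IsSolution d x r' t ∧ t ≤ s :=
  let Φ : (Fin d → ℝ≥0∞) →o (Fin d → ℝ≥0∞) := ⟨passageMap x r', monotone_passageMap hx r'⟩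
  ⟨Φ.lfp, isSolution_of_passageMap_eq hx hr' Φ.map_lfp,
    Φ.lfp_le (passageMap_le_of_isSolution hrr hs)⟩

theorem IsSmallestSolution.le_of_isSolution (hx : MemE d x) {r r' : Fin d → ℝ}
    {s s' : Fin d → ℝ≥0∞} (hs' : IsSmallestSolution d x r' s') (hr' : ∀ i, 0 ≤ r' i)
    (hrr : ∀ i, r' i ≤ r i) (hs : IsSolution d x r s) : s' ≤ s :=
  let ⟨_, ht, hts⟩ := exists_isSolution_le hx hr' hrr hs
  (hs'.2 _ ht).trans hts

theorem isSolution_iSup (hx : MemE d x) {rs : ℕ → Fin d → ℝ} {r : Fin d → ℝ}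
    (hr : Tendsto rs atTop (𝓝 r)) {u : ℕ → Fin d → ℝ≥0∞} (hu : Monotone u)
    (hsol : ∀ n, IsSolution d x (rs n) (u n)) : IsSolution d x r (⨆ n, u n) := by
  intro i hi
  simp only [iSup_apply] at hi ⊢
  have hterm : ∀ j, Tendsto (fun n => preLimE (x i j) (u n j)) atTop
      (𝓝 (preLimE (x i j) (⨆ n, u n j))) := by
    intro j
    rcases eq_or_ne i j with rfl | hij
    · exact tendsto_preLimE_iSup_of_ne_top (hx.leftLimEx i i) (fun _ _ h => hu h i) hi
    · exact tendsto_preLimE_iSup (hx.mono i j hij) (hx.leftLimEx i j) (fun _ _ h => hu h j)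
  have hne_bot : ∀ j, preLimE (x i j) (⨆ n, u n j) ≠ ⊥ := by
    intro j
    rcases eq_or_ne i j with rfl | hij
    · exact preLimE_ne_bot _ hi
    · exact ne_bot_of_le_ne_bot EReal.zero_ne_bot (hx.preLimE_nonneg hij _)
  have hri : Tendsto (fun n => (rs n i : EReal)) atTop (𝓝 (r i : EReal)) :=
    EReal.tendsto_coe.2 (((continuous_apply i).tendsto r).comp hr)
  have hsum := EReal.tendsto_finset_sum (s := Finset.univ) (fun j _ => hterm j)
    (fun j _ => hne_bot j)
  have hlim := (EReal.continuousAt_add (Or.inl (EReal.coe_ne_top _))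
    (Or.inl (EReal.coe_ne_bot _))).tendsto.comp (hri.prodMk_nhds hsum)
  exact tendsto_nhds_unique hlim (tendsto_const_nhds.congr fun n =>
    (hsol n i (ne_top_of_le_ne_top hi (le_iSup (fun n => u n i) n))).symm)

theorem IsSmallestSolution.tendsto (hx : MemE d x) {r : Fin d → ℝ} {s : Fin d → ℝ≥0∞}
    (hs : IsSmallestSolution d x r s) {rs : ℕ → Fin d → ℝ} {ss : ℕ → Fin d → ℝ≥0∞}
    (hrs : ∀ n i, 0 ≤ rs n i) (hmono : Monotone rs) (hlim : Tendsto rs atTop (𝓝 r))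
    (hss : ∀ n, IsSmallestSolution d x (rs n) (ss n)) : Tendsto ss atTop (𝓝 s) := by
  have hss_mono : Monotone ss := fun m n hmn =>
    (hss m).le_of_isSolution hx (hrs m) (fun i => hmono hmn i) (hss n).1
  have hss_le : ∀ n, ss n ≤ s := fun n =>
    (hss n).le_of_isSolution hx (hrs n) (fun i => hmono.ge_of_tendsto hlim n i) hs.1
  have hsup : ⨆ n, ss n = s := le_antisymm (iSup_le hss_le)
    (hs.2 _ (isSolution_iSup hx hlim hss_mono fun n => (hss n).1))
  exact hsup ▸ tendsto_atTop_iSup hss_mono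

end Solutions

theorem smallest_solution_monotone_and_continuous_general (d : ℕ)
    (x : Fin d → Fin d → ℝ → ℝ) (hx : MemE d x)
    (r : Fin d → ℝ)
    (s : Fin d → ℝ≥0∞) (hs : IsSmallestSolution d x r s) :
    (∀ (r' : Fin d → ℝ) (s' : Fin d → ℝ≥0∞), (∀ i, 0 ≤ r' i) → (∀ i, r' i ≤ r i) →
        IsSmallestSolution d x r' s' → s' ≤ s) ∧
    (∀ (rseq : ℕ → Fin d → ℝ) (sseq : ℕ → Fin d → ℝ≥0∞),
        (∀ n i, 0 ≤ rseq n i) → Monotone rseq →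
        Filter.Tendsto rseq Filter.atTop (nhds r) →
        (∀ n, IsSmallestSolution d x (rseq n) (sseq n)) →
        Filter.Tendsto sseq Filter.atTop (nhds s)) :=
  ⟨fun _ _ hr' hrr hs' => hs'.le_of_isSolution hx hr' hrr hs.1,
    fun _ _ hrs hmono hlim hss => hs.tendsto hx hrs hmono hlim hss⟩

/-- monotonicity and left-continuity of smallest solutions in the level `r`.
If `r' ≤ r` then the smallest solutions satisfy `s' ≤ s`; and if `rseq` is a nondecreasing
sequence of levels converging to `r`, the corresponding smallest solutions converge to `s`. -/
theorem smallest_solution_monotone_and_continuous (d : ℕ) (hd : 1 ≤ d)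
    (x : Fin d → Fin d → ℝ → ℝ) (hx : MemE d x)
    (r : Fin d → ℝ) (hr : ∀ i, 0 ≤ r i)
    (s : Fin d → ℝ≥0∞) (hs : IsSmallestSolution d x r s) :
    (∀ (r' : Fin d → ℝ) (s' : Fin d → ℝ≥0∞), (∀ i, 0 ≤ r' i) → (∀ i, r' i ≤ r i) →
        IsSmallestSolution d x r' s' → s' ≤ s) ∧
    (∀ (rseq : ℕ → Fin d → ℝ) (sseq : ℕ → Fin d → ℝ≥0∞),
        (∀ n i, 0 ≤ rseq n i) → Monotone rseq →
        Filter.Tendsto rseq Filter.atTop (nhds r) →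
        (∀ n, IsSmallestSolution d x (rseq n) (sseq n)) →
        Filter.Tendsto sseq Filter.atTop (nhds s)) :=
  smallest_solution_monotone_and_continuous_general d x hx r s hs

end
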